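/- Under the same smoothness and quadratic growth assumptions, the proximal gradient mapping T satisfies F(T(x)) − F⋆ ≤ (8/μ)·‖x − T(x)‖²_L for every x with F(x) ≤ F(x₀). -/

import Mathlib

/-!
The proximal step is a descent step, so `T x` stays in the sublevel set of `x₀` and quadratic
growth gives `μ / 2 * dist_L (T x, X⋆) ^ 2 ≤ F (T x) - F⋆`. Optimality of `T x` in the proximal
model, together with convexity of `f` at `T x`, makes `f' (T x) - f' x + L (x - T x)` a subgradient
of `F` at `T x`. Both summands have dual norm at most `r = ‖x - T x‖_L`, the first by
co-coercivity of the gradient of a convex `L`-smooth function. Hence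
`F (T x) - F⋆ ≤ 2 r dist_L (T x, X⋆)`, and the two bounds combine to `F (T x) - F⋆ ≤ 8 r² / μ`.
-/

open scoped RealInnerProductSpace

/-- Distance to a set in the weighted Euclidean norm `‖u‖_L = √(∑ i, L i * u i ^ 2)`. -/
noncomputable def distL {n : ℕ} (L : Fin n → ℝ) (x : EuclideanSpace ℝ (Fin n))
    (S : Set (EuclideanSpace ℝ (Fin n))) : ℝ :=
  ⨅ y : S, Real.sqrt (∑ i, L i * (x i - (y : EuclideanSpace ℝ (Fin n)) i) ^ 2)

open Finset Filter Set

lemma HasDerivAt.le_of_forall_Ioc_le {h : ℝ → ℝ} {h' c : ℝ} (hh : HasDerivAt h h' 0)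
    (hle : ∀ t ∈ Ioc (0 : ℝ) 1, h t ≤ h 0 + t * c) : h' ≤ c := by
  refine le_of_tendsto hh.tendsto_slope_zero_right ?_
  filter_upwards [Ioc_mem_nhdsGT zero_lt_one] with t ht
  rw [zero_add, smul_eq_mul, inv_mul_le_iff₀ ht.1]
  linarith [hle t ht]

lemma nonneg_of_forall_Ioc_mul_add_sq_mul_nonneg {B K : ℝ}
    (h : ∀ t ∈ Ioc (0 : ℝ) 1, 0 ≤ t * B + t ^ 2 * K) : 0 ≤ B := by
  have hderiv : HasDerivAt (fun t : ℝ => -(t * B + t ^ 2 * K)) (-B) 0 := by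
    simpa using (((hasDerivAt_id' (0 : ℝ)).mul_const B).fun_add
      ((hasDerivAt_pow 2 (0 : ℝ)).mul_const K)).fun_neg
  have := hderiv.le_of_forall_Ioc_le (c := 0) fun t ht => by linarith [h t ht]
  linarith

section InnerProductSpace

variable {E : Type*} [NormedAddCommGroup E] [InnerProductSpace ℝ E] [CompleteSpace E]

lemma HasGradientAt.inner_le_of_forall_Ioc_le {φ : E → ℝ} {g x v : E} {c : ℝ}
    (hφ : HasGradientAt φ g x) (hle : ∀ t ∈ Ioc (0 : ℝ) 1, φ (x + t • v) ≤ φ x + t * c) :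
    ⟪g, v⟫ ≤ c :=
  HasDerivAt.le_of_forall_Ioc_le (hφ.hasFDerivAt.hasLineDerivAt v) (by simpa using hle)

lemma ConvexOn.add_inner_sub_le_of_hasGradientAt {f : E → ℝ} {g x : E}
    (hf : ConvexOn ℝ univ f) (hg : HasGradientAt f g x) (y : E) : f x + ⟪g, y - x⟫ ≤ f y := by
  have := hg.inner_le_of_forall_Ioc_le (v := y - x) (c := f y - f x) fun t ht => by
    have hconv := hf.2 (mem_univ x) (mem_univ y) (sub_nonneg.2 ht.2) ht.1.le (by ring)
    rw [show (1 - t) • x + t • y = x + t • (y - x) by module, smul_eq_mul, smul_eq_mul] at hconv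
    linarith
  linarith

end InnerProductSpace

namespace Real

variable {ι : Type*} (s : Finset ι) {L : ι → ℝ}

lemma sum_mul_mul_le_sqrt_mul_sqrt (hL : ∀ i ∈ s, 0 ≤ L i) (a b : ι → ℝ) :
    ∑ i ∈ s, L i * a i * b i ≤ √(∑ i ∈ s, L i * a i ^ 2) * √(∑ i ∈ s, L i * b i ^ 2) := by
  have h := sum_mul_le_sqrt_mul_sqrt s (fun i => √(L i) * a i) (fun i => √(L i) * b i)
  have hmul : ∀ i ∈ s, √(L i) * a i * (√(L i) * b i) = L i * a i * b i := fun i hi => by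
    linear_combination (a i * b i) * mul_self_sqrt (hL i hi)
  have hsq : ∀ c : ι → ℝ, ∀ i ∈ s, (√(L i) * c i) ^ 2 = L i * c i ^ 2 := fun c i hi => by
    rw [mul_pow, sq_sqrt (hL i hi)]
  rwa [sum_congr rfl hmul, sum_congr rfl (hsq a), sum_congr rfl (hsq b)] at h

lemma sum_mul_le_sqrt_sum_div_mul_sqrt (hL : ∀ i ∈ s, 0 < L i) (a b : ι → ℝ) :
    ∑ i ∈ s, a i * b i ≤ √(∑ i ∈ s, a i ^ 2 / L i) * √(∑ i ∈ s, L i * b i ^ 2) := by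
  have h := sum_mul_mul_le_sqrt_mul_sqrt s (fun i hi => (hL i hi).le) (fun i => a i / L i) b
  have hmul : ∀ i ∈ s, L i * (a i / L i) * b i = a i * b i := fun i hi => by
    field_simp [(hL i hi).ne']
  have hsq : ∀ i ∈ s, L i * (a i / L i) ^ 2 = a i ^ 2 / L i := fun i hi => by
    field_simp [(hL i hi).ne']
  rwa [sum_congr rfl hmul, sum_congr rfl hsq] at h

end Real

lemma sum_mul_add_mul_sq {ι : Type*} (s : Finset ι) (L a b : ι → ℝ) (t : ℝ) :
    ∑ i ∈ s, L i * (a i + t * b i) ^ 2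
      = ∑ i ∈ s, L i * a i ^ 2 + t * (2 * ∑ i ∈ s, L i * a i * b i)
        + t ^ 2 * ∑ i ∈ s, L i * b i ^ 2 := by
  simp only [mul_sum, ← sum_add_distrib]
  exact sum_congr rfl fun i _ => by ring

section Weighted

variable {ι : Type*} [Fintype ι] {L : ι → ℝ} {f ψ : EuclideanSpace ℝ ι → ℝ}
  {f' : EuclideanSpace ℝ ι → EuclideanSpace ℝ ι}

lemma EuclideanSpace.real_inner_eq_sum (a b : EuclideanSpace ℝ ι) : ⟪a, b⟫ = ∑ i, a i * b i := by
  simp [PiLp.inner_apply, mul_comm]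

def HasQuadraticUpperBound (L : ι → ℝ) (f : EuclideanSpace ℝ ι → ℝ)
    (f' : EuclideanSpace ℝ ι → EuclideanSpace ℝ ι) : Prop :=
  ∀ x y, f x ≤ f y + ⟪f' y, x - y⟫ + 1 / 2 * ∑ i, L i * (x i - y i) ^ 2

noncomputable def proxModel (L : ι → ℝ) (ψ : EuclideanSpace ℝ ι → ℝ)
    (g x y : EuclideanSpace ℝ ι) : ℝ :=
  ⟪g, y - x⟫ + 1 / 2 * ∑ i, L i * (y i - x i) ^ 2 + ψ y

lemma HasQuadraticUpperBound.add_inner_add_half_sum_sq_div_le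
    (hsmooth : HasQuadraticUpperBound L f f') (hL : ∀ i, 0 < L i)
    (hf' : ∀ x, HasGradientAt f (f' x) x) (hf : ConvexOn ℝ univ f) (u w : EuclideanSpace ℝ ι) :
    f w + ⟪f' w, u - w⟫ + 1 / 2 * ∑ i, (f' u i - f' w i) ^ 2 / L i ≤ f u := by
  -- `u - e` minimises the quadratic upper bound at `u` minus the affine lower bound at `w`
  set e : EuclideanSpace ℝ ι := WithLp.toLp 2 fun i => (f' u i - f' w i) / L i
  have hconv := hf.add_inner_sub_le_of_hasGradientAt (hf' w) (u - e)
  have hup := hsmooth (u - e) u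
  have hquad : ∑ i, L i * ((u - e) i - u i) ^ 2 = ∑ i, (f' u i - f' w i) ^ 2 / L i :=
    sum_congr rfl fun i _ => by
      simp only [e, PiLp.sub_apply, sub_sub_cancel_left]
      field_simp [(hL i).ne']
  have hinner : ⟪f' u, e⟫ - ⟪f' w, e⟫ = ∑ i, (f' u i - f' w i) ^ 2 / L i := by
    rw [← inner_sub_left, EuclideanSpace.real_inner_eq_sum]
    exact sum_congr rfl fun i _ => by simp only [e, PiLp.sub_apply]; ring
  rw [show u - e - w = (u - w) - e by abel, inner_sub_right] at hconv
  rw [show u - e - u = -e by abel, inner_neg_right, hquad] at hup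
  linarith

lemma HasQuadraticUpperBound.sum_sq_div_le
    (hsmooth : HasQuadraticUpperBound L f f') (hL : ∀ i, 0 < L i)
    (hf' : ∀ x, HasGradientAt f (f' x) x) (hf : ConvexOn ℝ univ f) (u w : EuclideanSpace ℝ ι) :
    ∑ i, (f' u i - f' w i) ^ 2 / L i ≤ ∑ i, L i * (u i - w i) ^ 2 := by
  set S := ∑ i, (f' u i - f' w i) ^ 2 / L i
  set W := ∑ i, L i * (u i - w i) ^ 2
  have huw := hsmooth.add_inner_add_half_sum_sq_div_le hL hf' hf u w
  have hwu := hsmooth.add_inner_add_half_sum_sq_div_le hL hf' hf w u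
  have hsymm : ∑ i, (f' w i - f' u i) ^ 2 / L i = S := sum_congr rfl fun i _ => by ring
  have hS_le : S ≤ ∑ i, (f' u i - f' w i) * (u i - w i) := by
    have hinner : ⟪f' u, w - u⟫ = -⟪f' u, u - w⟫ := by rw [← inner_neg_right, neg_sub]
    rw [hsymm, hinner] at hwu
    have := EuclideanSpace.real_inner_eq_sum (f' u - f' w) (u - w)
    rw [inner_sub_left] at this
    simp only [PiLp.sub_apply] at this
    linarith
  have hcs := Real.sum_mul_le_sqrt_sum_div_mul_sqrt univ (fun i _ => hL i)
    (fun i => f' u i - f' w i) (fun i => u i - w i)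
  have hS0 : 0 ≤ S := sum_nonneg fun i _ => div_nonneg (sq_nonneg _) (hL i).le
  have hsqrt : √S ≤ √W := by
    rcases (Real.sqrt_nonneg S).eq_or_lt with h0 | hpos
    · rw [← h0]
      exact Real.sqrt_nonneg W
    · refine le_of_mul_le_mul_left ?_ hpos
      rw [Real.mul_self_sqrt hS0]
      exact hS_le.trans hcs
  exact (Real.sqrt_le_sqrt_iff (sum_nonneg fun i _ => mul_nonneg (hL i).le (sq_nonneg _))).1 hsqrt

lemma HasQuadraticUpperBound.add_le_of_isMinOn_proxModel (hsmooth : HasQuadraticUpperBound L f f')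
    {x z : EuclideanSpace ℝ ι} (hz : IsMinOn (proxModel L ψ (f' x) x) univ z) :
    f z + ψ z ≤ f x + ψ x := by
  have hmin := isMinOn_univ_iff.1 hz x
  simp only [proxModel, sub_self, inner_zero_right, ne_eq, OfNat.ofNat_ne_zero,
    not_false_eq_true, zero_pow, mul_zero, sum_const_zero, add_zero, zero_add] at hmin
  linarith [hsmooth z x]

lemma ConvexOn.le_add_inner_add_sum_of_isMinOn_proxModel (hψ : ConvexOn ℝ univ ψ)
    {g x z : EuclideanSpace ℝ ι} (hz : IsMinOn (proxModel L ψ g x) univ z)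
    (y : EuclideanSpace ℝ ι) :
    ψ z ≤ ψ y + ⟪g, y - z⟫ + ∑ i, L i * (z i - x i) * (y i - z i) := by
  suffices 0 ≤ ⟪g, y - z⟫ + ∑ i, L i * (z i - x i) * (y i - z i) + (ψ y - ψ z) by linarith
  refine nonneg_of_forall_Ioc_mul_add_sq_mul_nonneg
    (K := 1 / 2 * ∑ i, L i * (y i - z i) ^ 2) fun t ht => ?_
  have hmin := isMinOn_univ_iff.1 hz (z + t • (y - z))
  have hψt := hψ.2 (mem_univ z) (mem_univ y) (sub_nonneg.2 ht.2) ht.1.le (sub_add_cancel 1 t)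
  rw [show (1 - t) • z + t • y = z + t • (y - z) by module, smul_eq_mul, smul_eq_mul] at hψt
  have hinner : ⟪g, z + t • (y - z) - x⟫ = ⟪g, z - x⟫ + t * ⟪g, y - z⟫ := by
    rw [show z + t • (y - z) - x = (z - x) + t • (y - z) by abel, inner_add_right,
      real_inner_smul_right]
  have hcoord : ∑ i, L i * ((z + t • (y - z)) i - x i) ^ 2
      = ∑ i, L i * ((z i - x i) + t * (y i - z i)) ^ 2 :=
    sum_congr rfl fun i _ => by
      simp only [PiLp.add_apply, PiLp.smul_apply, PiLp.sub_apply, smul_eq_mul]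
      ring
  simp only [proxModel] at hmin
  rw [hinner, hcoord, sum_mul_add_mul_sq] at hmin
  linear_combination hmin + hψt

lemma sub_le_two_mul_sqrt_mul_sqrt_of_isMinOn_proxModel (hsmooth : HasQuadraticUpperBound L f f')
    (hL : ∀ i, 0 < L i) (hf' : ∀ x, HasGradientAt f (f' x) x) (hf : ConvexOn ℝ univ f)
    (hψ : ConvexOn ℝ univ ψ) {x z : EuclideanSpace ℝ ι}
    (hz : IsMinOn (proxModel L ψ (f' x) x) univ z) (y : EuclideanSpace ℝ ι) :
    f z + ψ z - (f y + ψ y)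
      ≤ 2 * √(∑ i, L i * (x i - z i) ^ 2) * √(∑ i, L i * (z i - y i) ^ 2) := by
  set r := √(∑ i, L i * (x i - z i) ^ 2)
  set D := √(∑ i, L i * (z i - y i) ^ 2)
  have hopt := hψ.le_add_inner_add_sum_of_isMinOn_proxModel hz y
  have hconv := hf.add_inner_sub_le_of_hasGradientAt (hf' z) y
  have hgrad : ⟪f' z - f' x, z - y⟫ ≤ r * D := by
    have hcoco : ∑ i, (f' z i - f' x i) ^ 2 / L i ≤ ∑ i, L i * (x i - z i) ^ 2 :=
      (hsmooth.sum_sq_div_le hL hf' hf z x).trans_eq (sum_congr rfl fun i _ => by ring)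
    rw [EuclideanSpace.real_inner_eq_sum]
    simp only [PiLp.sub_apply]
    refine (Real.sum_mul_le_sqrt_sum_div_mul_sqrt univ (fun i _ => hL i) _ _).trans ?_
    gcongr
    exact Real.sqrt_le_sqrt hcoco
  have hprox : ∑ i, L i * (x i - z i) * (z i - y i) ≤ r * D :=
    Real.sum_mul_mul_le_sqrt_mul_sqrt univ (fun i _ => (hL i).le) _ _
  have hflip : ∑ i, L i * (z i - x i) * (y i - z i) = ∑ i, L i * (x i - z i) * (z i - y i) :=
    sum_congr rfl fun i _ => by ring
  have hinner : ⟪f' z - f' x, z - y⟫ = ⟪f' x, y - z⟫ - ⟪f' z, y - z⟫ := by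
    rw [← neg_sub y z, inner_neg_right, inner_sub_left]
    ring
  linarith

end Weighted

lemma le_mul_distL_of_forall {n : ℕ} {L : Fin n → ℝ} {x : EuclideanSpace ℝ (Fin n)}
    {S : Set (EuclideanSpace ℝ (Fin n))} (hS : S.Nonempty) {a c : ℝ} (hc : 0 ≤ c)
    (h : ∀ y ∈ S, a ≤ c * √(∑ i, L i * (x i - y i) ^ 2)) : a ≤ c * distL L x S := by
  have := hS.to_subtype
  rw [distL, Real.mul_iInf_of_nonneg hc]
  exact le_ciInf fun y => h y y.2

lemma le_div_mul_sq_of_le_two_mul_mul {A r d μ : ℝ} (hμ : 0 < μ) (hA : A ≤ 2 * r * d)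
    (hd : μ / 2 * d ^ 2 ≤ A) : A ≤ 8 / μ * r ^ 2 := by
  rw [div_mul_eq_mul_div, le_div_iff₀ hμ]
  rcases le_or_gt A 0 with hA0 | hA0
  · nlinarith [sq_nonneg r]
  · have hsq : A ^ 2 ≤ 4 * r ^ 2 * d ^ 2 := by nlinarith
    nlinarith

theorem stmt_10_general {n : ℕ} (L : Fin n → ℝ) (hL : ∀ i, 0 < L i)
    (f : EuclideanSpace ℝ (Fin n) → ℝ) (f' : EuclideanSpace ℝ (Fin n) → EuclideanSpace ℝ (Fin n))
    (hf' : ∀ x, HasGradientAt f (f' x) x)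
    (hfconv : ConvexOn ℝ Set.univ f)
    (hsmooth : ∀ x y, f x ≤ f y + ⟪f' y, x - y⟫ + (1 / 2) * ∑ i, L i * (x i - y i) ^ 2)
    (ψ : EuclideanSpace ℝ (Fin n) → ℝ) (hψ : ConvexOn ℝ Set.univ ψ)
    (F : EuclideanSpace ℝ (Fin n) → ℝ) (hF : ∀ x, F x = f x + ψ x)
    (Fstar : ℝ) (Xstar : Set (EuclideanSpace ℝ (Fin n)))
    (hne : Xstar.Nonempty) (hXstar : Xstar = {x | F x = Fstar})
    (x₀ : EuclideanSpace ℝ (Fin n)) (μ : ℝ) (hμ : 0 < μ)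
    (hgrowth : ∀ x, F x ≤ F x₀ → Fstar + μ / 2 * (distL L x Xstar) ^ 2 ≤ F x)
    (T : EuclideanSpace ℝ (Fin n) → EuclideanSpace ℝ (Fin n))
    (hT : ∀ x y, ⟪f' x, T x - x⟫ + (1 / 2) * (∑ i, L i * (T x i - x i) ^ 2) + ψ (T x)
        ≤ ⟪f' x, y - x⟫ + (1 / 2) * (∑ i, L i * (y i - x i) ^ 2) + ψ y) :
    ∀ x, F x ≤ F x₀ →
      F (T x) - Fstar ≤ (8 / μ) * ∑ i, L i * (x i - T x i) ^ 2 := by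
  intro x hx
  have hTx : IsMinOn (proxModel L ψ (f' x) x) univ (T x) := isMinOn_univ_iff.2 (hT x)
  have hdesc : F (T x) ≤ F x := by
    simpa only [hF] using HasQuadraticUpperBound.add_le_of_isMinOn_proxModel hsmooth hTx
  have hstep : 0 ≤ ∑ i, L i * (x i - T x i) ^ 2 :=
    sum_nonneg fun i _ => mul_nonneg (hL i).le (sq_nonneg _)
  have hgap : F (T x) - Fstar
      ≤ 2 * √(∑ i, L i * (x i - T x i) ^ 2) * distL L (T x) Xstar := by
    refine le_mul_distL_of_forall hne (by positivity) fun y hy => ?_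
    rw [hXstar, mem_ofPred_eq] at hy
    simpa only [← hy, hF] using
      sub_le_two_mul_sqrt_mul_sqrt_of_isMinOn_proxModel hsmooth hL hf' hfconv hψ hTx y
  have hbound := le_div_mul_sq_of_le_two_mul_mul hμ hgap
    (by linarith [hgrowth (T x) (hdesc.trans hx)])
  rwa [Real.sq_sqrt hstep] at hbound

theorem stmt_10 {n : ℕ} (L : Fin n → ℝ) (hL : ∀ i, 0 < L i)
    (f : EuclideanSpace ℝ (Fin n) → ℝ) (f' : EuclideanSpace ℝ (Fin n) → EuclideanSpace ℝ (Fin n))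
    (hf' : ∀ x, HasGradientAt f (f' x) x)
    (hfconv : ConvexOn ℝ Set.univ f)
    (hsmooth : ∀ x y, f x ≤ f y + ⟪f' y, x - y⟫ + (1 / 2) * ∑ i, L i * (x i - y i) ^ 2)
    (ψ : EuclideanSpace ℝ (Fin n) → ℝ) (hψ : ConvexOn ℝ Set.univ ψ)
    (F : EuclideanSpace ℝ (Fin n) → ℝ) (hF : ∀ x, F x = f x + ψ x)
    (Fstar : ℝ) (Xstar : Set (EuclideanSpace ℝ (Fin n)))
    (hne : Xstar.Nonempty) (hXstar : Xstar = {x | F x = Fstar}) (hmin : ∀ x, Fstar ≤ F x)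
    (x₀ : EuclideanSpace ℝ (Fin n)) (μ : ℝ) (hμ : 0 < μ)
    (hgrowth : ∀ x, F x ≤ F x₀ → Fstar + μ / 2 * (distL L x Xstar) ^ 2 ≤ F x)
    (T : EuclideanSpace ℝ (Fin n) → EuclideanSpace ℝ (Fin n))
    (hT : ∀ x y, ⟪f' x, T x - x⟫ + (1 / 2) * (∑ i, L i * (T x i - x i) ^ 2) + ψ (T x)
        ≤ ⟪f' x, y - x⟫ + (1 / 2) * (∑ i, L i * (y i - x i) ^ 2) + ψ y) :
    ∀ x, F x ≤ F x₀ →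
      F (T x) - Fstar ≤ (8 / μ) * ∑ i, L i * (x i - T x i) ^ 2 :=
  stmt_10_general L hL f f' hf' hfconv hsmooth ψ hψ F hF Fstar Xstar hne hXstar x₀ μ hμ hgrowth T hT
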